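/- arXiv:1903.07433 — 6 statements merged into one kernel-verified Lean document; each statement's English description precedes it below -/
import Mathlib

section
/- Let ρ : ℝ³ → [0,∞) be measurable with ρ ∈ L^∞ ∩ L^{5/3}. Then for every x ∈ ℝ³, ∫ ρ(y)/|x−y|² dy ≤ C (‖ρ‖_{L^∞})^{4/9} (‖ρ‖_{L^{5/3}})^{5/9} for some universal constant C. -/
/-!
Split the integral at radius `ε` around `x`. On the ball, `ρ ≤ ‖ρ‖_∞` and, in polar
coordinates, `∫_{|x-y|<ε} |x-y|⁻² dy = 4πε`, where `4π = 3 vol(B₁)`. Off the ball, Hölder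
with exponents `5/3` and `5/2` gives `‖ρ‖_{5/3} (∫_{|x-y|≥ε} |x-y|⁻⁵ dy)^{2/5} =
‖ρ‖_{5/3} (2π ε⁻²)^{2/5}`. The radius `ε = (‖ρ‖_{5/3} / ‖ρ‖_∞)^{5/9}` makes both terms
multiples of `‖ρ‖_∞^{4/9} ‖ρ‖_{5/3}^{5/9}`.
-/

open MeasureTheory Metric Set Module
open scoped ENNReal

local notation "ℝ³" => EuclideanSpace ℝ (Fin 3)

theorem lintegral_Ioo_zero_rpow_sub_one {a : ℝ} (ha : 0 < a) {ε : ℝ} (hε : 0 ≤ ε) :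
    ∫⁻ r in Ioo 0 ε, ENNReal.ofReal (r ^ (a - 1)) = ENNReal.ofReal (ε ^ a / a) := by
  have ha' : -1 < a - 1 := by linarith
  rw [← ofReal_integral_eq_lintegral_ofReal, ← integral_Ioc_eq_integral_Ioo,
    ← intervalIntegral.integral_of_le hε, integral_rpow (Or.inl ha'), sub_add_cancel,
    Real.zero_rpow ha.ne', sub_zero]
  · exact (intervalIntegral.intervalIntegrable_rpow' ha').1.mono_set Ioo_subset_Ioc_self
  · filter_upwards [ae_restrict_mem measurableSet_Ioo] with r hr using Real.rpow_nonneg hr.1.le _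

theorem lintegral_Ici_rpow_sub_one {a : ℝ} (ha : a < 0) {ε : ℝ} (hε : 0 < ε) :
    ∫⁻ r in Ici ε, ENNReal.ofReal (r ^ (a - 1)) = ENNReal.ofReal (ε ^ a / -a) := by
  have ha' : a - 1 < -1 := by linarith
  rw [← Measure.restrict_congr_set Ioi_ae_eq_Ici, ← ofReal_integral_eq_lintegral_ofReal
    (integrableOn_Ioi_rpow_of_lt ha' hε), integral_Ioi_rpow_of_lt ha' hε, sub_add_cancel,
    neg_div, div_neg]
  filter_upwards [ae_restrict_mem measurableSet_Ioi] with r hr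
  exact Real.rpow_nonneg (hε.trans hr).le _

namespace MeasureTheory

variable {E : Type*} [NormedAddCommGroup E] [NormedSpace ℝ E] [MeasurableSpace E] [BorelSpace E]
  [FiniteDimensional ℝ E] [Nontrivial E] (μ : Measure E) [μ.IsAddHaarMeasure]

theorem lintegral_fun_norm_addHaar {f : ℝ → ℝ≥0∞} (hf : Measurable f) :
    ∫⁻ x, f ‖x‖ ∂μ = finrank ℝ E * μ (ball 0 1) *
      ∫⁻ r in Ioi 0, ENNReal.ofReal (r ^ (finrank ℝ E - 1)) * f r :=
  calc ∫⁻ x, f ‖x‖ ∂μ = ∫⁻ x : ({(0)}ᶜ : Set E), f ‖x.1‖ ∂(μ.comap (↑)) := by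
        rw [lintegral_subtype_comap (measurableSet_singleton _).compl fun x ↦ f ‖x‖,
          restrict_compl_singleton]
    _ = ∫⁻ x, f x.2 ∂μ.toSphere.prod (.volumeIoiPow (finrank ℝ E - 1)) := by
        simpa using μ.measurePreserving_homeomorphUnitSphereProd.lintegral_comp_emb
          (Homeomorph.measurableEmbedding _) (f ∘ Subtype.val ∘ Prod.snd)
    _ = μ.toSphere univ * ∫⁻ r : Ioi (0 : ℝ), f r ∂.volumeIoiPow (finrank ℝ E - 1) := by
        rw [lintegral_prod _ (by fun_prop)]
        simp only [lintegral_const, mul_comm]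
    _ = _ := by
        rw [Measure.volumeIoiPow,
          lintegral_withDensity_eq_lintegral_mul _ (by fun_prop) (by fun_prop),
          μ.toSphere_apply_univ, ← lintegral_subtype_comap measurableSet_Ioi]
        rfl

theorem setLIntegral_enorm_sub_rpow_neg (x : E) (s : ℝ) {I : Set ℝ} (hI : MeasurableSet I) :
    ∫⁻ y in (fun y ↦ ‖x - y‖) ⁻¹' I, ‖x - y‖ₑ ^ (-s) ∂μ = finrank ℝ E * μ (ball 0 1) *
      ∫⁻ r in I ∩ Ioi 0, ENNReal.ofReal (r ^ ((finrank ℝ E : ℝ) - 1 - s)) := by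
  set g : ℝ → ℝ≥0∞ := I.indicator fun r ↦ ENNReal.ofReal r ^ (-s)
  have hg : Measurable g := by unfold g; fun_prop
  calc ∫⁻ y in (fun y ↦ ‖x - y‖) ⁻¹' I, ‖x - y‖ₑ ^ (-s) ∂μ = ∫⁻ y, g ‖y - x‖ ∂μ := by
        rw [← lintegral_indicator (hI.preimage (by fun_prop))]
        congr with y
        by_cases h : ‖x - y‖ ∈ I <;> simp [g, h, norm_sub_rev y x, ofReal_norm]
    _ = ∫⁻ y, g ‖y‖ ∂μ := lintegral_sub_right_eq_self (g ‖·‖) x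
    _ = _ := by
        rw [lintegral_fun_norm_addHaar μ hg, ← lintegral_indicator measurableSet_Ioi,
          ← lintegral_indicator (hI.inter measurableSet_Ioi)]
        congr 1
        congr with r
        by_cases hr : 0 < r
        · have hpow : ENNReal.ofReal (r ^ (finrank ℝ E - 1)) * ENNReal.ofReal r ^ (-s) =
              ENNReal.ofReal (r ^ ((finrank ℝ E : ℝ) - 1 - s)) := by
            rw [ENNReal.ofReal_rpow_of_pos hr, ← ENNReal.ofReal_mul (by positivity),
              ← Real.rpow_natCast, Nat.cast_pred finrank_pos, ← Real.rpow_add hr, ← sub_eq_add_neg]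
          by_cases hrI : r ∈ I <;> simp [g, hr, hrI, hpow]
        · simp [indicator, hr]

theorem lintegral_ball_enorm_sub_rpow_neg (x : E) {s : ℝ} (hs : s < finrank ℝ E) {ε : ℝ}
    (hε : 0 ≤ ε) :
    ∫⁻ y in ball x ε, ‖x - y‖ₑ ^ (-s) ∂μ =
      finrank ℝ E * μ (ball 0 1) * ENNReal.ofReal (ε ^ (finrank ℝ E - s) / (finrank ℝ E - s)) := by
  have hball : ball x ε = (fun y ↦ ‖x - y‖) ⁻¹' Iio ε := by
    ext y; simp [dist_eq_norm, norm_sub_rev y x]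
  rw [hball, setLIntegral_enorm_sub_rpow_neg μ x s measurableSet_Iio, Iio_inter_Ioi, sub_right_comm,
    lintegral_Ioo_zero_rpow_sub_one (sub_pos.2 hs) hε]

theorem lintegral_compl_ball_enorm_sub_rpow_neg (x : E) {s : ℝ} (hs : finrank ℝ E < s) {ε : ℝ}
    (hε : 0 < ε) :
    ∫⁻ y in (ball x ε)ᶜ, ‖x - y‖ₑ ^ (-s) ∂μ =
      finrank ℝ E * μ (ball 0 1) * ENNReal.ofReal (ε ^ (finrank ℝ E - s) / (s - finrank ℝ E)) := by
  have hball : (ball x ε)ᶜ = (fun y ↦ ‖x - y‖) ⁻¹' Ici ε := by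
    ext y; simp [dist_eq_norm, norm_sub_rev y x]
  rw [hball, setLIntegral_enorm_sub_rpow_neg μ x s measurableSet_Ici,
    inter_eq_left.2 (Ici_subset_Ioi.2 hε), sub_right_comm,
    lintegral_Ici_rpow_sub_one (sub_neg.2 hs) hε, neg_sub]

end MeasureTheory

theorem enorm_div_norm_sq_le {E : Type*} [NormedAddCommGroup E] (a : ℝ) (z : E) :
    ‖a / ‖z‖ ^ 2‖ₑ ≤ ‖a‖ₑ * ‖z‖ₑ ^ (-2 : ℝ) := by
  rcases eq_or_ne z 0 with rfl | hz
  · simp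
  · rw [div_eq_mul_inv, enorm_mul, enorm_inv (by positivity), enorm_pow, enorm_norm,
      ENNReal.rpow_neg, ENNReal.rpow_ofNat]

theorem near_far_sum_at_balanced_radius {κ M N : ℝ} (hκ : 0 ≤ κ) (hM : 0 < M) (hN : 0 < N) :
    M * (κ * (N / M) ^ (5 / 9 : ℝ)) +
        N * (κ * ((N / M) ^ (5 / 9 : ℝ)) ^ (-2 : ℝ) / 2) ^ (2 / 5 : ℝ) =
      (κ + (κ / 2) ^ (2 / 5 : ℝ)) * M ^ (4 / 9 : ℝ) * N ^ (5 / 9 : ℝ) := by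
  have hMN : 0 < N / M := div_pos hN hM
  have hnear : M * (N / M) ^ (5 / 9 : ℝ) = M ^ (4 / 9 : ℝ) * N ^ (5 / 9 : ℝ) := by
    rw [Real.div_rpow hN.le hM.le, show (4 / 9 : ℝ) = 1 - 5 / 9 by norm_num,
      Real.rpow_sub hM, Real.rpow_one]
    field_simp
  have hfar : N * (((N / M) ^ (5 / 9 : ℝ)) ^ (-2 : ℝ)) ^ (2 / 5 : ℝ) =
      M ^ (4 / 9 : ℝ) * N ^ (5 / 9 : ℝ) := by
    rw [← Real.rpow_mul hMN.le, ← Real.rpow_mul hMN.le, Real.div_rpow hN.le hM.le,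
      show (5 / 9 : ℝ) * -2 * (2 / 5) = -(4 / 9) by norm_num, Real.rpow_neg hN.le,
      Real.rpow_neg hM.le, show (5 / 9 : ℝ) = 1 - 4 / 9 by norm_num, Real.rpow_sub hN,
      Real.rpow_one]
    field_simp
  have hsplit : (κ * ((N / M) ^ (5 / 9 : ℝ)) ^ (-2 : ℝ) / 2) ^ (2 / 5 : ℝ) =
      (κ / 2) ^ (2 / 5 : ℝ) * (((N / M) ^ (5 / 9 : ℝ)) ^ (-2 : ℝ)) ^ (2 / 5 : ℝ) := by
    rw [mul_div_right_comm, Real.mul_rpow (by positivity) (by positivity)]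
  rw [hsplit]
  linear_combination κ * hnear + (κ / 2) ^ (2 / 5 : ℝ) * hfar

theorem lintegral_enorm_mul_enorm_sub_rpow_neg_two_le {ρ : ℝ³ → ℝ}
    (hρ : AEStronglyMeasurable ρ) (x : ℝ³) {ε : ℝ} (hε : 0 < ε) :
    ∫⁻ y, ‖ρ y‖ₑ * ‖x - y‖ₑ ^ (-2 : ℝ) ≤
      eLpNorm ρ ∞ volume * (3 * volume (ball (0 : ℝ³) 1) * .ofReal ε) +
      eLpNorm ρ (5 / 3) volume * (3 * volume (ball (0 : ℝ³) 1) *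
        .ofReal (ε ^ (-2 : ℝ) / 2)) ^ (2 / 5 : ℝ) := by
  set G : ℝ³ → ℝ≥0∞ := fun y ↦ ‖x - y‖ₑ ^ (-2 : ℝ)
  have hG : Measurable G := by fun_prop
  have hdim : (finrank ℝ (ℝ³) : ℝ) = 3 := by simp
  have hnear : ∫⁻ y in ball x ε, ‖ρ y‖ₑ * G y ≤
      eLpNorm ρ ∞ volume * (3 * volume (ball (0 : ℝ³) 1) * .ofReal ε) :=
    calc ∫⁻ y in ball x ε, ‖ρ y‖ₑ * G y ≤ ∫⁻ y in ball x ε, eLpNorm ρ ∞ volume * G y := by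
          refine lintegral_mono_ae ?_
          filter_upwards [ae_restrict_of_ae (eLpNorm_exponent_top (f := ρ) ▸ ae_le_eLpNormEssSup)]
            with y hy
          gcongr
      _ = _ := by
          rw [lintegral_const_mul _ hG,
            lintegral_ball_enorm_sub_rpow_neg volume x (by rw [hdim]; norm_num) hε.le, hdim]
          norm_num
  have hfar : ∫⁻ y in (ball x ε)ᶜ, ‖ρ y‖ₑ * G y ≤
      eLpNorm ρ (5 / 3) volume * (3 * volume (ball (0 : ℝ³) 1) *
        .ofReal (ε ^ (-2 : ℝ) / 2)) ^ (2 / 5 : ℝ) := by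
    have hpq : (5 / 3 : ℝ).HolderConjugate (5 / 2) := by constructor <;> norm_num
    calc ∫⁻ y in (ball x ε)ᶜ, ‖ρ y‖ₑ * G y
        ≤ (∫⁻ y in (ball x ε)ᶜ, ‖ρ y‖ₑ ^ (5 / 3 : ℝ)) ^ (1 / (5 / 3 : ℝ)) *
            (∫⁻ y in (ball x ε)ᶜ, G y ^ (5 / 2 : ℝ)) ^ (1 / (5 / 2 : ℝ)) :=
          ENNReal.lintegral_mul_le_Lp_mul_Lq _ hpq hρ.enorm.restrict hG.aemeasurable
      _ ≤ _ := by
          gcongr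
          · calc _ = eLpNorm ρ (5 / 3) (volume.restrict (ball x ε)ᶜ) := by
                  rw [eLpNorm_eq_lintegral_rpow_enorm_toReal (by norm_num)
                    (by norm_num [ENNReal.div_eq_top])]
                  norm_num
              _ ≤ _ := eLpNorm_restrict_le _ _ _ _
          · simp only [G, ← ENNReal.rpow_mul]
            rw [show (-2 : ℝ) * (5 / 2) = -5 by norm_num,
              lintegral_compl_ball_enorm_sub_rpow_neg volume x (by rw [hdim]; norm_num) hε, hdim]
            norm_num
  calc ∫⁻ y, ‖ρ y‖ₑ * G y
      = (∫⁻ y in ball x ε, ‖ρ y‖ₑ * G y) + ∫⁻ y in (ball x ε)ᶜ, ‖ρ y‖ₑ * G y :=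
        (lintegral_add_compl _ measurableSet_ball).symm
    _ ≤ _ := add_le_add hnear hfar

theorem integral_div_norm_sub_sq_le {ρ : ℝ³ → ℝ} (hρtop : MemLp ρ ∞ volume)
    (hρ : MemLp ρ (5 / 3) volume) (x : ℝ³) {ε : ℝ} (hε : 0 < ε) :
    ∫ y, ρ y / ‖x - y‖ ^ 2 ≤
      (eLpNorm ρ ∞ volume).toReal * (3 * volume.real (ball (0 : ℝ³) 1) * ε) +
      (eLpNorm ρ (5 / 3) volume).toReal *
        (3 * volume.real (ball (0 : ℝ³) 1) * ε ^ (-2 : ℝ) / 2) ^ (2 / 5 : ℝ) := by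
  have hV : 3 * volume (ball (0 : ℝ³) 1) =
      .ofReal (3 * volume.real (ball (0 : ℝ³) 1)) := by
    rw [ENNReal.ofReal_mul zero_le_three, measureReal_def,
      ENNReal.ofReal_toReal measure_ball_lt_top.ne]
    norm_num
  set κ := 3 * volume.real (ball (0 : ℝ³) 1)
  have hκ : 0 ≤ κ := by positivity
  refine (Real.le_norm_self _).trans ?_
  rw [← toReal_enorm]
  refine ENNReal.toReal_le_of_le_ofReal (by positivity) ?_
  calc ‖∫ y, ρ y / ‖x - y‖ ^ 2‖ₑ ≤ ∫⁻ y, ‖ρ y‖ₑ * ‖x - y‖ₑ ^ (-2 : ℝ) :=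
        (enorm_integral_le_lintegral_enorm _).trans
          (lintegral_mono fun _ ↦ enorm_div_norm_sq_le _ _)
    _ ≤ _ := lintegral_enorm_mul_enorm_sub_rpow_neg_two_le hρ.1 x hε
    _ = _ := by
        rw [ENNReal.ofReal_add (by positivity) (by positivity),
          ENNReal.ofReal_mul ENNReal.toReal_nonneg, ENNReal.ofReal_mul ENNReal.toReal_nonneg,
          ENNReal.ofReal_toReal hρtop.2.ne, ENNReal.ofReal_toReal hρ.2.ne,
          ← ENNReal.ofReal_rpow_of_nonneg (by positivity) (by norm_num), mul_div_assoc,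
          ENNReal.ofReal_mul hκ, ENNReal.ofReal_mul hκ, hV]

theorem stmt1 : ∃ C : ℝ, 0 < C ∧ ∀ ρ : EuclideanSpace ℝ (Fin 3) → ℝ,
    Measurable ρ → (∀ y, 0 ≤ ρ y) → MemLp ρ ⊤ volume → MemLp ρ (5/3) volume →
    ∀ x : EuclideanSpace ℝ (Fin 3),
      (∫ y, ρ y / ‖x - y‖ ^ 2) ≤
        C * (eLpNorm ρ ⊤ volume).toReal ^ ((4:ℝ)/9) *
          (eLpNorm ρ (5/3) volume).toReal ^ ((5:ℝ)/9) := by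
  set κ := 3 * volume.real (ball (0 : ℝ³) 1)
  have hκ : 0 < κ := mul_pos three_pos
    (ENNReal.toReal_pos (measure_ball_pos _ _ one_pos).ne' measure_ball_lt_top.ne)
  refine ⟨κ + (κ / 2) ^ (2 / 5 : ℝ), by positivity, fun ρ _ _ hρtop hρ x ↦ ?_⟩
  by_cases hρ0 : ρ =ᵐ[volume] 0
  · rw [integral_eq_zero_of_ae (by filter_upwards [hρ0] with y hy; simp [hy])]
    positivity
  set M := (eLpNorm ρ ⊤ volume).toReal
  set N := (eLpNorm ρ (5 / 3) volume).toReal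
  have hM : 0 < M :=
    ENNReal.toReal_pos ((eLpNorm_eq_zero_iff hρtop.1 (by simp)).not.2 hρ0) hρtop.2.ne
  have hN : 0 < N :=
    ENNReal.toReal_pos ((eLpNorm_eq_zero_iff hρ.1 (by norm_num)).not.2 hρ0) hρ.2.ne
  calc ∫ y, ρ y / ‖x - y‖ ^ 2
      ≤ M * (κ * (N / M) ^ (5 / 9 : ℝ)) +
          N * (κ * ((N / M) ^ (5 / 9 : ℝ)) ^ (-2 : ℝ) / 2) ^ (2 / 5 : ℝ) :=
        integral_div_norm_sub_sq_le hρtop hρ x (by positivity)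
    _ = _ := near_far_sum_at_balanced_radius hκ.le hM hN
end

section
/- Let Γ : [t, t+Δ] → ℝ be C², let t₀ ∈ [t, t+Δ] be a point where |Γ| attains its minimum on [t, t+Δ], and suppose |Γ''(s)| ≤ B for all s and |Γ'(t₀)| ≥ m > 0 with B Δ ≤ m/4. Then for all s ∈ [t, t+Δ], |Γ(s)| ≥ (m/4) |s − t₀|. -/
/-!
Expand `Γ` to first order at `t₀`. Since `|Γ|` (equivalently `Γ²`) is minimal at `t₀`
on the interval, the one-sided Fermat condition gives `Γ(t₀) · Γ'(t₀)(s - t₀) ≥ 0`, so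
the linear part `Γ(t₀) + Γ'(t₀)(s - t₀)` has modulus at least `m |s - t₀|`. The
remainder is at most `B |s - t₀|² ≤ B Δ |s - t₀| ≤ (m/4) |s - t₀|`, which leaves
`|Γ(s)| ≥ (3m/4) |s - t₀|`.
-/

open Set

theorem mul_deriv_mul_sub_nonneg_of_isMinOn_abs {f : ℝ → ℝ} {f' a b : ℝ} {s : Set ℝ}
    (hmin : IsMinOn (fun x => |f x|) s a) (hf : HasDerivAt f f' a) (hab : uIcc a b ⊆ s) :
    0 ≤ f a * (f' * (b - a)) := by
  have hmin_sq : IsMinOn (fun x => f x ^ 2) s a :=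
    isMinOn_iff.2 fun x hx => sq_le_sq.2 (isMinOn_iff.1 hmin x hx)
  have hcone : b - a ∈ posTangentConeAt s a :=
    sub_mem_posTangentConeAt_of_segment_subset (segment_eq_uIcc a b ▸ hab)
  have hderiv : 0 ≤ (b - a) * (2 * f a * f') := by
    simpa using hmin_sq.localize.hasFDerivWithinAt_nonneg
      (hf.pow 2).hasDerivWithinAt.hasFDerivWithinAt hcone
  linarith

theorem abs_le_abs_add_of_mul_nonneg {p q : ℝ} (h : 0 ≤ p * q) : |q| ≤ |p + q| :=
  sq_le_sq.1 (by nlinarith [sq_nonneg p])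

theorem abs_sub_sub_mul_le_of_hasDerivAt_uIcc {f f' f'' : ℝ → ℝ} {a b C : ℝ}
    (hf : ∀ x ∈ uIcc a b, HasDerivAt f (f' x) x)
    (hf' : ∀ x ∈ uIcc a b, HasDerivAt f' (f'' x) x)
    (hC : ∀ x ∈ uIcc a b, |f'' x| ≤ C) :
    |f b - f a - f' a * (b - a)| ≤ C * |b - a| * |b - a| := by
  have hf'_lip : ∀ x ∈ uIcc a b, |f' x - f' a| ≤ C * |b - a| := fun x hx =>
    calc |f' x - f' a| ≤ C * |x - a| :=
          (convex_uIcc a b).norm_image_sub_le_of_norm_hasDerivWithin_le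
            (fun y hy => (hf' y hy).hasDerivWithinAt) hC left_mem_uIcc hx
      _ ≤ C * |b - a| := mul_le_mul_of_nonneg_left (abs_sub_left_of_mem_uIcc hx)
          ((abs_nonneg _).trans (hC a left_mem_uIcc))
  have hg : ∀ x ∈ uIcc a b, HasDerivAt (fun y => f y - f' a * y) (f' x - f' a) x :=
    fun x hx => by simpa using (hf x hx).fun_sub ((hasDerivAt_id x).const_mul (f' a))
  have hmvt : |(f b - f' a * b) - (f a - f' a * a)| ≤ C * |b - a| * |b - a| :=
    (convex_uIcc a b).norm_image_sub_le_of_norm_hasDerivWithin_le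
      (fun y hy => (hg y hy).hasDerivWithinAt) hf'_lip left_mem_uIcc right_mem_uIcc
  convert hmvt using 2
  ring

theorem stmt9_general (t Δ t₀ m B : ℝ) (Γ Γ' Γ'' : ℝ → ℝ)
    (ht₀ : t₀ ∈ Set.Icc t (t + Δ))
    (hd1 : ∀ s ∈ Set.Icc t (t + Δ), HasDerivAt Γ (Γ' s) s)
    (hd2 : ∀ s ∈ Set.Icc t (t + Δ), HasDerivAt Γ' (Γ'' s) s)
    (hmin : ∀ s ∈ Set.Icc t (t + Δ), |Γ t₀| ≤ |Γ s|)
    (hB : ∀ s ∈ Set.Icc t (t + Δ), |Γ'' s| ≤ B)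
    (hm' : m ≤ |Γ' t₀|) (hBΔ : B * Δ ≤ m / 4) :
    ∀ s ∈ Set.Icc t (t + Δ), m / 4 * |s - t₀| ≤ |Γ s| := by
  intro s hs
  have hsub : uIcc t₀ s ⊆ Icc t (t + Δ) := uIcc_subset_Icc ht₀ hs
  have hsign : 0 ≤ Γ t₀ * (Γ' t₀ * (s - t₀)) :=
    mul_deriv_mul_sub_nonneg_of_isMinOn_abs (isMinOn_iff.2 hmin) (hd1 t₀ ht₀) hsub
  have hlinear : m * |s - t₀| ≤ |Γ t₀ + Γ' t₀ * (s - t₀)| :=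
    calc m * |s - t₀| ≤ |Γ' t₀| * |s - t₀| := by gcongr
      _ = |Γ' t₀ * (s - t₀)| := (abs_mul _ _).symm
      _ ≤ _ := abs_le_abs_add_of_mul_nonneg hsign
  have hremainder := abs_sub_sub_mul_le_of_hasDerivAt_uIcc (fun x hx => hd1 x (hsub hx))
    (fun x hx => hd2 x (hsub hx)) (fun x hx => hB x (hsub hx))
  have htriangle :
      |Γ t₀ + Γ' t₀ * (s - t₀)| ≤ |Γ s| + |Γ s - Γ t₀ - Γ' t₀ * (s - t₀)| :=
    calc |Γ t₀ + Γ' t₀ * (s - t₀)|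
        = |Γ s - (Γ s - Γ t₀ - Γ' t₀ * (s - t₀))| := by ring_nf
      _ ≤ _ := abs_sub _ _
  have hB0 : 0 ≤ B := (abs_nonneg _).trans (hB t₀ ht₀)
  have hdist : |s - t₀| ≤ Δ := by simpa [Real.dist_eq] using Real.dist_le_of_mem_Icc hs ht₀
  have hsmall : B * |s - t₀| ≤ m / 4 := (mul_le_mul_of_nonneg_left hdist hB0).trans hBΔ
  nlinarith [abs_nonneg (s - t₀), mul_nonneg hB0 (abs_nonneg (s - t₀))]

theorem stmt9 (t Δ t₀ m B : ℝ) (Γ Γ' Γ'' : ℝ → ℝ)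
    (hΔ : 0 ≤ Δ) (ht₀ : t₀ ∈ Set.Icc t (t + Δ))
    (hd1 : ∀ s ∈ Set.Icc t (t + Δ), HasDerivAt Γ (Γ' s) s)
    (hd2 : ∀ s ∈ Set.Icc t (t + Δ), HasDerivAt Γ' (Γ'' s) s)
    (hmin : ∀ s ∈ Set.Icc t (t + Δ), |Γ t₀| ≤ |Γ s|)
    (hB : ∀ s ∈ Set.Icc t (t + Δ), |Γ'' s| ≤ B)
    (hm : 0 < m) (hm' : m ≤ |Γ' t₀|) (hBΔ : B * Δ ≤ m / 4) :
    ∀ s ∈ Set.Icc t (t + Δ), m / 4 * |s - t₀| ≤ |Γ s| :=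
  stmt9_general t Δ t₀ m B Γ Γ' Γ'' ht₀ hd1 hd2 hmin hB hm' hBΔ
end

section
/- Let l > 0, V, η, h > 0, and let X, Y : [t, t+Δ] → ℝ³ be such that |X(s)−Y(s)| ≥ (h V^{−η}/4)|s−t₀| for some t₀ ∈ [t, t+Δ] and all s. Then ∫_t^{t+Δ} χ(|X(s)−Y(s)| > l) / |X(s)−Y(s)|² ds ≤ C V^{η} / (l h), with a universal constant C. -/
open MeasureTheory Set

/-! With `c = h V^{-η}/4`, the integrand is dominated by `K(|s - t₀|)`, where `K(r) = l⁻²` for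
`r ≤ l/c` and `K(r) = (c r)⁻²` beyond. The plateau and the tail of `K` each contribute `2/(c l)`
to its integral over `ℝ`. -/

noncomputable def truncatedInvSq (l c r : ℝ) : ℝ :=
  if r ≤ l / c then (l ^ 2)⁻¹ else ((c * r) ^ 2)⁻¹

theorem truncatedInvSq_nonneg (l c r : ℝ) : 0 ≤ truncatedInvSq l c r := by
  unfold truncatedInvSq; split_ifs <;> positivity

theorem inv_sq_le_truncatedInvSq {l c r d : ℝ} (hl : 0 < l) (hc : 0 < c) (hld : l < d)
    (hcd : c * r ≤ d) : (d ^ 2)⁻¹ ≤ truncatedInvSq l c r := by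
  unfold truncatedInvSq
  split_ifs with hr
  · exact inv_anti₀ (by positivity) (pow_le_pow_left₀ hl.le hld.le 2)
  · have hcr : 0 < c * r := mul_pos hc ((div_pos hl hc).trans (not_le.1 hr))
    exact inv_anti₀ (by positivity) (pow_le_pow_left₀ hcr.le hcd 2)

theorem inv_sq_eqOn_rpow_neg_two (a : ℝ) (ha : 0 ≤ a) :
    EqOn (fun r : ℝ => r ^ (-2 : ℝ)) (fun r => (r ^ 2)⁻¹) (Ioi a) := fun r hr => by
  show r ^ (-2 : ℝ) = (r ^ 2)⁻¹
  rw [Real.rpow_neg (ha.trans (le_of_lt hr)), Real.rpow_two]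

theorem integrableOn_Ioi_inv_sq {a : ℝ} (ha : 0 < a) :
    IntegrableOn (fun r : ℝ => (r ^ 2)⁻¹) (Ioi a) :=
  (integrableOn_Ioi_rpow_of_lt (by norm_num) ha).congr_fun (inv_sq_eqOn_rpow_neg_two a ha.le)
    measurableSet_Ioi

theorem integral_Ioi_inv_sq {a : ℝ} (ha : 0 < a) :
    ∫ r in Ioi a, (r ^ 2)⁻¹ = a⁻¹ := by
  rw [← setIntegral_congr_fun measurableSet_Ioi (inv_sq_eqOn_rpow_neg_two a ha.le),
    integral_Ioi_rpow_of_lt (by norm_num) ha]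
  norm_num [Real.rpow_neg_one]

theorem setIntegral_Ioi_zero_truncatedInvSq {l c : ℝ} (hl : 0 < l) (hc : 0 < c) :
    ∫ r in Ioi 0, truncatedInvSq l c r = 2 / (c * l) := by
  have ha : 0 < l / c := div_pos hl hc
  have hnear : EqOn (truncatedInvSq l c) (fun _ => (l ^ 2)⁻¹) (Ioc 0 (l / c)) :=
    fun r hr => if_pos hr.2
  have hfar : EqOn (truncatedInvSq l c) (fun r => (c ^ 2)⁻¹ * (r ^ 2)⁻¹) (Ioi (l / c)) :=
    fun r (hr : l / c < r) => by simp only [truncatedInvSq, if_neg hr.not_ge, mul_pow, mul_inv]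
  rw [← Ioc_union_Ioi_eq_Ioi ha.le, setIntegral_union (Ioc_disjoint_Ioi le_rfl) measurableSet_Ioi
    ((integrableOn_const measure_Ioc_lt_top.ne).congr_fun hnear.symm measurableSet_Ioc)
    (IntegrableOn.congr_fun (Integrable.const_mul (integrableOn_Ioi_inv_sq ha) _) hfar.symm
      measurableSet_Ioi),
    setIntegral_congr_fun measurableSet_Ioc hnear, setIntegral_congr_fun measurableSet_Ioi hfar,
    setIntegral_const, integral_const_mul, integral_Ioi_inv_sq ha, measureReal_def,
    Real.volume_Ioc, ENNReal.toReal_ofReal (by linarith), smul_eq_mul]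
  field_simp
  ring

theorem integral_comp_abs_sub_truncatedInvSq {l c : ℝ} (hl : 0 < l) (hc : 0 < c) (t₀ : ℝ) :
    ∫ s, truncatedInvSq l c |s - t₀| = 4 / (c * l) := by
  rw [integral_sub_right_eq_self (fun u => truncatedInvSq l c |u|), integral_comp_abs,
    setIntegral_Ioi_zero_truncatedInvSq hl hc]
  ring

theorem setIntegral_indicator_inv_sq_le {f : ℝ → ℝ} {S : Set ℝ} (hS : MeasurableSet S)
    {t₀ c l : ℝ} (hc : 0 < c) (hl : 0 < l) (hf : ∀ s ∈ S, c * |s - t₀| ≤ f s) :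
    ∫ s in S, {s | l < f s}.indicator (fun s => (f s ^ 2)⁻¹) s ≤ 4 / (c * l) := by
  have hK := integral_comp_abs_sub_truncatedInvSq hl hc t₀
  -- the majorant has a nonzero integral, which forces it to be integrable
  have hK_int : Integrable fun s => truncatedInvSq l c |s - t₀| :=
    Integrable.of_integral_ne_zero (by rw [hK]; positivity)
  have hK_nonneg : ∀ s, 0 ≤ truncatedInvSq l c |s - t₀| := fun s => truncatedInvSq_nonneg _ _ _
  have hle : ∀ s ∈ S, {s | l < f s}.indicator (fun s => (f s ^ 2)⁻¹) s ≤
      truncatedInvSq l c |s - t₀| := fun s hs => by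
    by_cases hls : s ∈ {s | l < f s}
    · rw [indicator_of_mem hls]
      exact inv_sq_le_truncatedInvSq hl hc hls (hf s hs)
    · rw [indicator_of_notMem hls]
      exact hK_nonneg s
  calc ∫ s in S, {s | l < f s}.indicator (fun s => (f s ^ 2)⁻¹) s
      ≤ ∫ s in S, truncatedInvSq l c |s - t₀| :=
        integral_mono_of_nonneg (ae_of_all _ fun s => indicator_nonneg (fun _ _ => by positivity) s)
          hK_int.integrableOn ((ae_restrict_iff' hS).2 (ae_of_all _ hle))
    _ ≤ ∫ s, truncatedInvSq l c |s - t₀| := setIntegral_le_integral hK_int (ae_of_all _ hK_nonneg)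
    _ = 4 / (c * l) := hK

theorem stmt10 : ∃ C : ℝ, 0 < C ∧
    ∀ (X Y : ℝ → EuclideanSpace ℝ (Fin 3)) (t Δ t₀ l V η h : ℝ),
    0 < l → 0 < V → 0 < η → 0 < h → 0 ≤ Δ → t₀ ∈ Set.Icc t (t + Δ) →
    (∀ s ∈ Set.Icc t (t + Δ), h * V ^ (-η) / 4 * |s - t₀| ≤ ‖X s - Y s‖) →
    (∫ s in Set.Icc t (t + Δ),
        Set.indicator {s : ℝ | l < ‖X s - Y s‖} (fun s => (‖X s - Y s‖ ^ 2)⁻¹) s) ≤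
      C * V ^ η / (l * h) := by
  refine ⟨16, by norm_num, fun X Y t Δ t₀ l V η h hl hV _ hh _ _ hXY => ?_⟩
  have hc : 0 < h * V ^ (-η) / 4 := by positivity
  calc _ ≤ 4 / (h * V ^ (-η) / 4 * l) :=
        setIntegral_indicator_inv_sq_le measurableSet_Icc hc hl hXY
    _ = 16 * V ^ η / (l * h) := by
      rw [Real.rpow_neg hV.le]
      field_simp
      norm_num
end

section
/- Let V : [0,T] → ℝ³ satisfy |V(t)|² = |v|² + 2∫₀ᵗ V(s)·G(s) ds, with ∫₀ᵗ |G(s)| ds ≤ M for all t ∈ [0,T]. Set Ṽ(t) = sup_{0≤s≤t} |V(s)|. Then for all t, |v|² ≥ |V(t)|² − 2 M Ṽ(t), and if Ṽ(t) > 4M then |v|² ≥ Ṽ(t)²/2 ≥ |V(t)|²/2. -/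
/-!
Bounding `⟪V, G⟫ ≤ ‖V‖ ‖G‖` inside the energy identity gives `‖V t‖² ≤ ‖v‖² + 2 M Ṽ(t)`.
For the second claim, apply this at a time `s₀ ≤ t` where `‖V‖` attains its maximum `Ṽ(t)`
on `[0, t]`, so that also `Ṽ(s₀) = Ṽ(t)`: then `‖v‖² ≥ Ṽ(t)² - 2 M Ṽ(t) = Ṽ(t) (Ṽ(t) - 2M)`,
and `Ṽ(t) > 4M` makes the second factor at least `Ṽ(t) / 2`.
-/

open MeasureTheory RealInnerProductSpace

noncomputable def runSup (V : ℝ → EuclideanSpace ℝ (Fin 3)) (t : ℝ) : ℝ :=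
  sSup ((fun s => ‖V s‖) '' Set.Icc 0 t)

lemma bddAbove_norm_image_Icc {E : Type*} [SeminormedAddCommGroup E] {f : ℝ → E}
    (hf : Continuous f) (a b : ℝ) : BddAbove ((fun s => ‖f s‖) '' Set.Icc a b) :=
  (isCompact_Icc.image hf.norm).bddAbove

section runSup

variable {V : ℝ → EuclideanSpace ℝ (Fin 3)}

lemma norm_le_runSup (hV : Continuous V) {s t : ℝ} (hs : s ∈ Set.Icc 0 t) :
    ‖V s‖ ≤ runSup V t :=
  le_csSup (bddAbove_norm_image_Icc hV 0 t) ⟨s, hs, rfl⟩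

lemma runSup_nonneg (hV : Continuous V) {t : ℝ} (ht : 0 ≤ t) : 0 ≤ runSup V t :=
  (norm_nonneg _).trans (norm_le_runSup hV ⟨le_rfl, ht⟩)

lemma runSup_mono (hV : Continuous V) {s t : ℝ} (hs : 0 ≤ s) (hst : s ≤ t) :
    runSup V s ≤ runSup V t :=
  csSup_le_csSup (bddAbove_norm_image_Icc hV 0 t) ⟨‖V 0‖, 0, ⟨le_rfl, hs⟩, rfl⟩
    (Set.image_mono (Set.Icc_subset_Icc le_rfl hst))

lemma exists_norm_eq_runSup (hV : Continuous V) {t : ℝ} (ht : 0 ≤ t) :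
    ∃ s ∈ Set.Icc 0 t, ‖V s‖ = runSup V t :=
  (isCompact_Icc.image hV.norm).sSup_mem ((Set.nonempty_Icc.2 ht).image _)

end runSup

lemma integral_inner_le_mul_integral_norm {E : Type*} [NormedAddCommGroup E]
    [InnerProductSpace ℝ E] {V G : ℝ → E} {t R : ℝ} (ht : 0 ≤ t)
    (hVG : IntervalIntegrable (fun s => ⟪V s, G s⟫) volume 0 t)
    (hG : IntervalIntegrable (fun s => ‖G s‖) volume 0 t)
    (hVR : ∀ s ∈ Set.Icc 0 t, ‖V s‖ ≤ R) :
    ∫ s in (0:ℝ)..t, ⟪V s, G s⟫ ≤ R * ∫ s in (0:ℝ)..t, ‖G s‖ := by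
  rw [← intervalIntegral.integral_const_mul]
  refine intervalIntegral.integral_mono_on ht hVG (hG.const_mul R) fun s hs => ?_
  calc ⟪V s, G s⟫ ≤ ‖V s‖ * ‖G s‖ := real_inner_le_norm _ _
    _ ≤ R * ‖G s‖ := mul_le_mul_of_nonneg_right (hVR s hs) (norm_nonneg _)

lemma norm_sq_sub_le_of_energy_eq {v : EuclideanSpace ℝ (Fin 3)}
    {V G : ℝ → EuclideanSpace ℝ (Fin 3)} (hV : Continuous V) (hG : Continuous G) {t M : ℝ}
    (ht : 0 ≤ t) (hEq : ‖V t‖ ^ 2 = ‖v‖ ^ 2 + 2 * ∫ s in (0:ℝ)..t, ⟪V s, G s⟫)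
    (hGM : ∫ s in (0:ℝ)..t, ‖G s‖ ≤ M) :
    ‖V t‖ ^ 2 - 2 * M * runSup V t ≤ ‖v‖ ^ 2 := by
  have hwork : ∫ s in (0:ℝ)..t, ⟪V s, G s⟫ ≤ runSup V t * ∫ s in (0:ℝ)..t, ‖G s‖ :=
    integral_inner_le_mul_integral_norm ht ((hV.inner hG).intervalIntegrable _ _)
      (hG.norm.intervalIntegrable _ _) fun s hs => norm_le_runSup hV hs
  have hM : runSup V t * ∫ s in (0:ℝ)..t, ‖G s‖ ≤ runSup V t * M :=
    mul_le_mul_of_nonneg_left hGM (runSup_nonneg hV ht)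
  linarith

theorem stmt12_general (T M : ℝ)
    (v : EuclideanSpace ℝ (Fin 3)) (V G : ℝ → EuclideanSpace ℝ (Fin 3))
    (hVc : Continuous V) (hGc : Continuous G)
    (hEq : ∀ t ∈ Set.Icc (0:ℝ) T,
      ‖V t‖ ^ 2 = ‖v‖ ^ 2 + 2 * ∫ s in (0:ℝ)..t, ⟪V s, G s⟫)
    (hG : ∀ t ∈ Set.Icc (0:ℝ) T, (∫ s in (0:ℝ)..t, ‖G s‖) ≤ M) :
    ∀ t ∈ Set.Icc (0:ℝ) T,
      ‖v‖ ^ 2 ≥ ‖V t‖ ^ 2 - 2 * M * runSup V t ∧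
      (runSup V t > 4 * M →
        ‖v‖ ^ 2 ≥ runSup V t ^ 2 / 2 ∧ runSup V t ^ 2 / 2 ≥ ‖V t‖ ^ 2 / 2) := by
  have energy : ∀ s ∈ Set.Icc (0:ℝ) T, ‖V s‖ ^ 2 - 2 * M * runSup V s ≤ ‖v‖ ^ 2 :=
    fun s hs => norm_sq_sub_le_of_energy_eq hVc hGc hs.1 (hEq s hs) (hG s hs)
  intro t ht
  refine ⟨energy t ht, fun hbig => ?_⟩
  obtain ⟨s₀, hs₀, hmax⟩ := exists_norm_eq_runSup hVc ht.1
  have hsup : runSup V s₀ = runSup V t :=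
    le_antisymm (runSup_mono hVc hs₀.1 hs₀.2) (hmax ▸ norm_le_runSup hVc ⟨hs₀.1, le_rfl⟩)
  have energy_s₀ := energy s₀ ⟨hs₀.1, hs₀.2.trans ht.2⟩
  rw [hmax, hsup] at energy_s₀
  have hR := runSup_nonneg hVc ht.1
  have hVt := norm_le_runSup hVc ⟨ht.1, le_rfl⟩
  constructor
  · nlinarith [mul_nonneg hR (sub_nonneg.2 hbig.le)]
  · nlinarith [norm_nonneg (V t)]

theorem stmt12 (T M : ℝ) (hT : 0 ≤ T) (hM : 0 ≤ M)
    (v : EuclideanSpace ℝ (Fin 3)) (V G : ℝ → EuclideanSpace ℝ (Fin 3))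
    (hVc : Continuous V) (hGc : Continuous G)
    (hEq : ∀ t ∈ Set.Icc (0:ℝ) T,
      ‖V t‖ ^ 2 = ‖v‖ ^ 2 + 2 * ∫ s in (0:ℝ)..t, ⟪V s, G s⟫)
    (hG : ∀ t ∈ Set.Icc (0:ℝ) T, (∫ s in (0:ℝ)..t, ‖G s‖) ≤ M) :
    ∀ t ∈ Set.Icc (0:ℝ) T,
      ‖v‖ ^ 2 ≥ ‖V t‖ ^ 2 - 2 * M * runSup V t ∧
      (runSup V t > 4 * M →
        ‖v‖ ^ 2 ≥ runSup V t ^ 2 / 2 ∧ runSup V t ^ 2 / 2 ≥ ‖V t‖ ^ 2 / 2) :=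
  stmt12_general T M v V G hVc hGc hEq hG
end

section
/- For constants C > 0, ν ∈ (0,2), ζ > 2ν, and λ > 0, with k = k(N) = ⌈N^ζ⌉, the quantity S_k' = C^k ∑_{j=0}^{k} binom(k,j) N^{ν(j+k)} t^{j+k} / (j+k)! satisfies S_k' ≤ (C')^{−N^ζ} for all sufficiently large N, uniformly for t in a bounded interval [0,T], where C' > 1. -/
/-!
Put `k = ⌈N ^ ζ⌉₊` and `M = max 1 T`. Each of the `k + 1` terms of the sum is at most
`(2 N ^ (2ν) M²) ^ k / k!`, using `binom(k, j) ≤ 2 ^ k`, `j + k ≤ 2k` and `(j + k)! ≥ k!`.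
Since `N ^ (2ν) ≤ k ^ δ` with `δ = 2ν / ζ < 1` and `k! ≥ (k / e) ^ k`, the whole expression is
at most `(k + 1) (2 C e M² k ^ (δ - 1)) ^ k`, which is below `2 ^ k 4 ^ (-k) = 2 ^ (-k)` once `k`
is large, and `2 ^ (-k) ≤ 2 ^ (-N ^ ζ)`.
-/

open Real Filter Finset
open scoped Nat

lemma choose_mul_rpow_mul_pow_div_factorial_le {x a M t : ℝ} (hx : 1 ≤ x) (ha : 0 ≤ a)
    (hM : 1 ≤ M) (ht₀ : 0 ≤ t) (htM : t ≤ M) {j k : ℕ} (hjk : j ≤ k) :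
    (k.choose j : ℝ) * x ^ (a * ((j : ℝ) + k)) * t ^ (j + k) / (j + k)! ≤
      (2 * x ^ (2 * a) * M ^ 2) ^ k / k ! := by
  have hchoose : (k.choose j : ℝ) ≤ 2 ^ k := by exact_mod_cast Nat.choose_le_two_pow k j
  have hx_pow : x ^ (a * ((j : ℝ) + k)) ≤ (x ^ (2 * a)) ^ k := by
    rw [← rpow_natCast, ← rpow_mul (by linarith)]
    have : (j : ℝ) ≤ k := by exact_mod_cast hjk
    exact rpow_le_rpow_of_exponent_le hx (by nlinarith)
  have ht_pow : t ^ (j + k) ≤ (M ^ 2) ^ k :=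
    calc t ^ (j + k) ≤ M ^ (j + k) := by gcongr
      _ ≤ M ^ (2 * k) := pow_le_pow_right₀ hM (by omega)
      _ = (M ^ 2) ^ k := pow_mul M 2 k
  have hfact : (k ! : ℝ) ≤ (j + k)! := by exact_mod_cast Nat.factorial_le (by omega)
  rw [mul_pow, mul_pow]
  gcongr

lemma sum_choose_mul_rpow_mul_pow_div_factorial_le {x a M t : ℝ} (hx : 1 ≤ x) (ha : 0 ≤ a)
    (hM : 1 ≤ M) (ht₀ : 0 ≤ t) (htM : t ≤ M) (k : ℕ) :
    ∑ j ∈ range (k + 1), (k.choose j : ℝ) * x ^ (a * ((j : ℝ) + k)) * t ^ (j + k) / (j + k)! ≤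
      (k + 1) * ((2 * x ^ (2 * a) * M ^ 2) ^ k / k !) := by
  simpa using sum_le_card_nsmul (range (k + 1)) _ _ fun j hj ↦
    choose_mul_rpow_mul_pow_div_factorial_le hx ha hM ht₀ htM
      (Nat.lt_succ_iff.mp (mem_range.mp hj))

lemma mul_rpow_pow_div_factorial_le {c δ : ℝ} (hc : 0 ≤ c) {k : ℕ} (hk : 0 < k) :
    (c * (k : ℝ) ^ δ) ^ k / k ! ≤ (c * exp 1 * (k : ℝ) ^ (δ - 1)) ^ k := by
  have hk' : (0 : ℝ) < k := by exact_mod_cast hk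
  have hk_pow_div_factorial : (k : ℝ) ^ k / k ! ≤ exp 1 ^ k := by
    simpa [← exp_nat_mul] using pow_div_factorial_le_exp _ hk'.le k
  calc (c * (k : ℝ) ^ δ) ^ k / k !
      = (c * (k : ℝ) ^ δ) ^ k * ((k : ℝ) ^ k / k !) / (k : ℝ) ^ k := by field_simp
    _ ≤ (c * (k : ℝ) ^ δ) ^ k * exp 1 ^ k / (k : ℝ) ^ k := by gcongr
    _ = (c * exp 1 * (k : ℝ) ^ (δ - 1)) ^ k := by
      rw [rpow_sub hk', rpow_one, mul_div_assoc', div_pow, mul_pow, mul_pow, mul_pow]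
      ring

lemma eventually_succ_mul_pow_div_factorial_le {c δ : ℝ} (hc : 0 ≤ c) (hδ : δ < 1) :
    ∀ᶠ k : ℕ in atTop, ∀ b : ℝ, 0 ≤ b → b ≤ c * (k : ℝ) ^ δ →
      (k + 1) * (b ^ k / k !) ≤ 2⁻¹ ^ k := by
  have hlim : Tendsto (fun k : ℕ ↦ c * exp 1 * (k : ℝ) ^ (δ - 1)) atTop (nhds 0) := by
    simpa [neg_sub] using ((tendsto_rpow_neg_atTop (by linarith : 0 < 1 - δ)).comp
      tendsto_natCast_atTop_atTop).const_mul (c * exp 1)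
  filter_upwards [hlim.eventually_le_const (by norm_num : (0 : ℝ) < 4⁻¹),
    eventually_gt_atTop 0] with k hk hk₀ b hb hbk
  have hsucc : (k + 1 : ℝ) ≤ 2 ^ k := by exact_mod_cast Nat.lt_two_pow_self
  calc (k + 1) * (b ^ k / k !) ≤ 2 ^ k * ((c * (k : ℝ) ^ δ) ^ k / k !) := by gcongr
    _ ≤ 2 ^ k * (c * exp 1 * (k : ℝ) ^ (δ - 1)) ^ k := by
      gcongr
      exact mul_rpow_pow_div_factorial_le hc hk₀
    _ ≤ 2 ^ k * 4⁻¹ ^ k := by gcongr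
    _ = 2⁻¹ ^ k := by rw [← mul_pow]; norm_num

lemma rpow_le_natCeil_rpow_rpow_div {x a ζ : ℝ} (hx : 0 ≤ x) (ha : 0 ≤ a) (hζ : 0 < ζ) :
    x ^ a ≤ (⌈x ^ ζ⌉₊ : ℝ) ^ (a / ζ) :=
  calc x ^ a = (x ^ ζ) ^ (a / ζ) := by rw [← rpow_mul hx, mul_div_cancel₀ _ hζ.ne']
    _ ≤ _ := by gcongr; exact Nat.le_ceil _

lemma inv_two_pow_natCeil_le (y : ℝ) : (2⁻¹ : ℝ) ^ ⌈y⌉₊ ≤ 2 ^ (-y) := by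
  rw [inv_pow, ← rpow_natCast, ← rpow_neg zero_le_two]
  exact rpow_le_rpow_of_exponent_le one_le_two (neg_le_neg (Nat.le_ceil y))

theorem stmt14_general (C ν ζ T : ℝ) (hC : 0 < C) (hν : 0 < ν)
    (hζ : 2 * ν < ζ) :
    ∃ C' : ℝ, 1 < C' ∧ ∃ N₀ : ℕ, ∀ N : ℕ, N₀ ≤ N → ∀ t ∈ Set.Icc (0:ℝ) T,
      C ^ ⌈(N:ℝ) ^ ζ⌉₊ *
        ∑ j ∈ Finset.range (⌈(N:ℝ) ^ ζ⌉₊ + 1),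
          ((⌈(N:ℝ) ^ ζ⌉₊).choose j : ℝ) *
            (N:ℝ) ^ (ν * ((j:ℝ) + (⌈(N:ℝ) ^ ζ⌉₊ : ℝ))) *
            t ^ (j + ⌈(N:ℝ) ^ ζ⌉₊) / (Nat.factorial (j + ⌈(N:ℝ) ^ ζ⌉₊) : ℝ)
        ≤ C' ^ (-(N:ℝ) ^ ζ) := by
  have hζ₀ : 0 < ζ := by linarith
  set M := max 1 T
  have hk_tendsto : Tendsto (fun N : ℕ ↦ ⌈(N : ℝ) ^ ζ⌉₊) atTop atTop :=
    tendsto_nat_ceil_atTop.comp ((tendsto_rpow_atTop hζ₀).comp tendsto_natCast_atTop_atTop)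
  obtain ⟨N₀, hN₀⟩ := eventually_atTop.mp <| (hk_tendsto.eventually <|
    eventually_succ_mul_pow_div_factorial_le (c := 2 * C * M ^ 2) (by positivity)
      ((div_lt_one hζ₀).mpr hζ)).and (eventually_ge_atTop 1)
  refine ⟨2, one_lt_two, N₀, fun N hN t ⟨ht₀, htT⟩ ↦ ?_⟩
  obtain ⟨hbound, hN₁⟩ := hN₀ N hN
  set k := ⌈(N : ℝ) ^ ζ⌉₊
  refine (mul_le_mul_of_nonneg_left (sum_choose_mul_rpow_mul_pow_div_factorial_le
    (by exact_mod_cast hN₁) hν.le (le_max_left 1 T) ht₀ (htT.trans (le_max_right 1 T)) k)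
    (by positivity)).trans ?_
  calc C ^ k * ((k + 1) * ((2 * (N : ℝ) ^ (2 * ν) * M ^ 2) ^ k / k !))
      = (k + 1) * ((2 * C * M ^ 2 * (N : ℝ) ^ (2 * ν)) ^ k / k !) := by ring
    _ ≤ 2⁻¹ ^ k := hbound _ (by positivity) (by
      gcongr; exact rpow_le_natCeil_rpow_rpow_div (Nat.cast_nonneg N) (by positivity) hζ₀)
    _ ≤ 2 ^ (-(N : ℝ) ^ ζ) := inv_two_pow_natCeil_le _

theorem stmt14 (C ν ζ T : ℝ) (hC : 0 < C) (hν : 0 < ν) (hν2 : ν < 2)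
    (hζ : 2 * ν < ζ) (hT : 0 < T) :
    ∃ C' : ℝ, 1 < C' ∧ ∃ N₀ : ℕ, ∀ N : ℕ, N₀ ≤ N → ∀ t ∈ Set.Icc (0:ℝ) T,
      C ^ ⌈(N:ℝ) ^ ζ⌉₊ *
        ∑ j ∈ Finset.range (⌈(N:ℝ) ^ ζ⌉₊ + 1),
          ((⌈(N:ℝ) ^ ζ⌉₊).choose j : ℝ) *
            (N:ℝ) ^ (ν * ((j:ℝ) + (⌈(N:ℝ) ^ ζ⌉₊ : ℝ))) *
            t ^ (j + ⌈(N:ℝ) ^ ζ⌉₊) / (Nat.factorial (j + ⌈(N:ℝ) ^ ζ⌉₊) : ℝ)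
        ≤ C' ^ (-(N:ℝ) ^ ζ) :=
  stmt14_general C ν ζ T hC hν hζ
end

section
/- Suppose a nonnegative function σ : [0,T] → ℝ satisfies σ(t) ≤ A ∫₀ᵗ∫₀^{t₁} σ(t₂) dt₂ dt₁ + B ∫₀ᵗ σ(t₁) dt₁ + D for constants A, B, D ≥ 0, and σ is bounded by M on [0,T]. Then for every integer k ≥ 1, σ(t) ≤ D ∑_{i=0}^{k−1} ∑_{j=0}^{i} binom(i,j) A^j B^{i−j} t^{i+j}/(i+j)! + M ∑_{j=0}^{k} binom(k,j) A^j B^{k−j} t^{k+j}/(k+j)!. -/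
/-!
Write `V f (t) = A ∫₀ᵗ∫₀^{t₁} f + B ∫₀ᵗ f`, so that the hypothesis reads `σ ≤ V σ + D`. Since `V` is
monotone on continuous functions, `k` substitutions give `σ ≤ D ∑_{i<k} Vⁱ 1 + M Vᵏ 1`. The
operators `f ↦ ∫∫ f` and `f ↦ ∫ f` commute and `p` primitives of `1` give `tᵖ / p!`, so `Vⁿ 1`
expands binomially; Pascal's rule is what makes `V (Vⁿ 1) = Vⁿ⁺¹ 1` hold for the expansion.
-/

open Finset intervalIntegral Set
open scoped Nat

theorem integral_pow_div_factorial (p : ℕ) (t : ℝ) :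
    ∫ s in (0 : ℝ)..t, s ^ p / p ! = t ^ (p + 1) / (p + 1)! := by
  rw [integral_div, integral_pow, Nat.factorial_succ]
  push_cast
  field_simp
  simp

section Kernel

variable (A B : ℝ)

/-- `iterKernel A B n m` is the `m`-fold primitive of `Vⁿ 1`; the summand indexed by `(i, j)` comes
from `i` double and `j` single integrations, `2 i + j + m` in total. -/
noncomputable def iterKernel (n m : ℕ) (t : ℝ) : ℝ :=
  ∑ ij ∈ antidiagonal n, (n.choose ij.1 : ℝ) *
    (A ^ ij.1 * B ^ ij.2 * (t ^ (2 * ij.1 + ij.2 + m) / (2 * ij.1 + ij.2 + m)!))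

@[fun_prop]
theorem continuous_iterKernel (n m : ℕ) : Continuous (iterKernel A B n m) := by
  unfold iterKernel
  fun_prop

theorem integral_iterKernel (n m : ℕ) (t : ℝ) :
    ∫ s in (0 : ℝ)..t, iterKernel A B n m s = iterKernel A B n (m + 1) t := by
  unfold iterKernel
  rw [integral_finsetSum fun _ _ => Continuous.intervalIntegrable (by fun_prop) _ _]
  simp only [integral_const_mul, integral_pow_div_factorial, add_assoc]

theorem iterKernel_zero_zero (t : ℝ) : iterKernel A B 0 0 t = 1 := by
  simp [iterKernel]

theorem iterKernel_succ (n : ℕ) (t : ℝ) :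
    iterKernel A B (n + 1) 0 t = A * iterKernel A B n 2 t + B * iterKernel A B n 1 t := by
  rw [iterKernel, sum_antidiagonal_choose_succ_mul
    (fun i j => A ^ i * B ^ j * (t ^ (2 * i + j + 0) / (2 * i + j + 0)!)), add_comm, iterKernel,
    iterKernel, mul_sum, mul_sum]
  congr 1
  · refine sum_congr rfl fun ij hij => ?_
    rw [Nat.choose_symm_of_eq_add (mem_antidiagonal.1 hij).symm]
    ring_nf
  · refine sum_congr rfl fun ij _ => ?_
    ring_nf

theorem iterKernel_eq_sum_range (n : ℕ) (t : ℝ) :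
    iterKernel A B n 0 t = ∑ j ∈ range (n + 1),
      (n.choose j : ℝ) * A ^ j * B ^ (n - j) * t ^ (n + j) / (n + j)! := by
  rw [iterKernel, Nat.sum_antidiagonal_eq_sum_range_succ_mk]
  refine sum_congr rfl fun j hj => ?_
  have hjn : 2 * j + (n - j) + 0 = n + j := by have := mem_range.1 hj; omega
  rw [hjn]
  ring

variable (D M : ℝ)

/-- The `m`-fold primitive of `D ∑_{i<k} Vⁱ 1 + M Vᵏ 1`. -/
noncomputable def iterBound (k m : ℕ) (t : ℝ) : ℝ :=
  D * ∑ i ∈ range k, iterKernel A B i m t + M * iterKernel A B k m t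

theorem continuous_iterBound (k m : ℕ) : Continuous (iterBound A B D M k m) := by
  unfold iterBound
  fun_prop

theorem integral_iterBound (k m : ℕ) (t : ℝ) :
    ∫ s in (0 : ℝ)..t, iterBound A B D M k m s = iterBound A B D M k (m + 1) t := by
  unfold iterBound
  rw [integral_add (Continuous.intervalIntegrable (by fun_prop) _ _)
    (Continuous.intervalIntegrable (by fun_prop) _ _), integral_const_mul, integral_const_mul,
    integral_finsetSum fun _ _ => Continuous.intervalIntegrable (by fun_prop) _ _]
  simp only [integral_iterKernel]

theorem iterBound_succ (k : ℕ) (t : ℝ) :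
    A * iterBound A B D M k 2 t + B * iterBound A B D M k 1 t + D
      = iterBound A B D M (k + 1) 0 t := by
  simp only [iterBound, sum_range_succ', iterKernel_zero_zero, iterKernel_succ, sum_add_distrib,
    ← mul_sum]
  ring

end Kernel

theorem continuousOn_primitive_Icc_zero {f : ℝ → ℝ} {t : ℝ} (ht : 0 ≤ t)
    (hf : ContinuousOn f (Icc 0 t)) : ContinuousOn (fun s => ∫ u in (0 : ℝ)..s, f u) (Icc 0 t) := by
  rw [← uIcc_of_le ht] at hf ⊢
  exact continuousOn_primitive_interval hf.integrableOn_uIcc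

theorem integral_integral_mono_on {f g : ℝ → ℝ} {t : ℝ} (ht : 0 ≤ t)
    (hf : ContinuousOn f (Icc 0 t)) (hg : ContinuousOn g (Icc 0 t))
    (hfg : ∀ s ∈ Icc 0 t, f s ≤ g s) :
    ∫ s in (0 : ℝ)..t, ∫ u in (0 : ℝ)..s, f u ≤ ∫ s in (0 : ℝ)..t, ∫ u in (0 : ℝ)..s, g u := by
  refine integral_mono_on ht ((continuousOn_primitive_Icc_zero ht hf).intervalIntegrable_of_Icc ht)
    ((continuousOn_primitive_Icc_zero ht hg).intervalIntegrable_of_Icc ht) fun s hs => ?_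
  have hst : Icc 0 s ⊆ Icc 0 t := Icc_subset_Icc_right hs.2
  exact integral_mono_on hs.1 ((hf.mono hst).intervalIntegrable_of_Icc hs.1)
    ((hg.mono hst).intervalIntegrable_of_Icc hs.1) fun u hu => hfg u (hst hu)

theorem le_iterBound {T A B D M : ℝ} {σ : ℝ → ℝ} (hA : 0 ≤ A) (hB : 0 ≤ B)
    (hσc : ContinuousOn σ (Icc 0 T)) (hσM : ∀ t ∈ Icc 0 T, σ t ≤ M)
    (hineq : ∀ t ∈ Icc 0 T, σ t ≤ A * (∫ s in (0:ℝ)..t, ∫ u in (0:ℝ)..s, σ u)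
      + B * (∫ s in (0:ℝ)..t, σ s) + D) (k : ℕ) :
    ∀ t ∈ Icc 0 T, σ t ≤ iterBound A B D M k 0 t := by
  induction k with
  | zero => simpa [iterBound, iterKernel_zero_zero] using hσM
  | succ k ih =>
    intro t ht
    set P := iterBound A B D M k 0
    have hσt : ContinuousOn σ (Icc 0 t) := hσc.mono (Icc_subset_Icc_right ht.2)
    have hPt : ContinuousOn P (Icc 0 t) := (continuous_iterBound A B D M k 0).continuousOn
    have hσP : ∀ s ∈ Icc 0 t, σ s ≤ P s := fun s hs => ih s ⟨hs.1, hs.2.trans ht.2⟩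
    calc σ t ≤ A * (∫ s in (0:ℝ)..t, ∫ u in (0:ℝ)..s, σ u) + B * (∫ s in (0:ℝ)..t, σ s) + D :=
          hineq t ht
      _ ≤ A * (∫ s in (0:ℝ)..t, ∫ u in (0:ℝ)..s, P u) + B * (∫ s in (0:ℝ)..t, P s) + D := by
          gcongr
          · exact integral_integral_mono_on ht.1 hσt hPt hσP
          · exact integral_mono_on ht.1 (hσt.intervalIntegrable_of_Icc ht.1)
              (hPt.intervalIntegrable_of_Icc ht.1) hσP
      _ = iterBound A B D M (k + 1) 0 t := by
          simp only [P, integral_iterBound]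
          exact iterBound_succ A B D M k t

theorem stmt16_general (T A B D M : ℝ) (σ : ℝ → ℝ)
    (hA : 0 ≤ A) (hB : 0 ≤ B)
    (hσc : ContinuousOn σ (Set.Icc 0 T))
    (hσM : ∀ t ∈ Set.Icc (0:ℝ) T, σ t ≤ M)
    (hineq : ∀ t ∈ Set.Icc (0:ℝ) T,
      σ t ≤ A * (∫ t₁ in (0:ℝ)..t, ∫ t₂ in (0:ℝ)..t₁, σ t₂)
            + B * (∫ t₁ in (0:ℝ)..t, σ t₁) + D) :
    ∀ k : ℕ, 1 ≤ k → ∀ t ∈ Set.Icc (0:ℝ) T,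
      σ t ≤ D * ∑ i ∈ Finset.range k, ∑ j ∈ Finset.range (i + 1),
              (i.choose j : ℝ) * A ^ j * B ^ (i - j) * t ^ (i + j) /
                (Nat.factorial (i + j) : ℝ)
        + M * ∑ j ∈ Finset.range (k + 1),
              (k.choose j : ℝ) * A ^ j * B ^ (k - j) * t ^ (k + j) /
                (Nat.factorial (k + j) : ℝ) := by
  intro k _ t ht
  simpa only [iterBound, iterKernel_eq_sum_range] using le_iterBound hA hB hσc hσM hineq k t ht

theorem stmt16 (T A B D M : ℝ) (σ : ℝ → ℝ) (hT : 0 ≤ T)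
    (hA : 0 ≤ A) (hB : 0 ≤ B) (hD : 0 ≤ D)
    (hσc : ContinuousOn σ (Set.Icc 0 T))
    (hσ0 : ∀ t ∈ Set.Icc (0:ℝ) T, 0 ≤ σ t)
    (hσM : ∀ t ∈ Set.Icc (0:ℝ) T, σ t ≤ M)
    (hineq : ∀ t ∈ Set.Icc (0:ℝ) T,
      σ t ≤ A * (∫ t₁ in (0:ℝ)..t, ∫ t₂ in (0:ℝ)..t₁, σ t₂)
            + B * (∫ t₁ in (0:ℝ)..t, σ t₁) + D) :
    ∀ k : ℕ, 1 ≤ k → ∀ t ∈ Set.Icc (0:ℝ) T,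
      σ t ≤ D * ∑ i ∈ Finset.range k, ∑ j ∈ Finset.range (i + 1),
              (i.choose j : ℝ) * A ^ j * B ^ (i - j) * t ^ (i + j) /
                (Nat.factorial (i + j) : ℝ)
        + M * ∑ j ∈ Finset.range (k + 1),
              (k.choose j : ℝ) * A ^ j * B ^ (k - j) * t ^ (k + j) /
                (Nat.factorial (k + j) : ℝ) :=
  stmt16_general T A B D M σ hA hB hσc hσM hineq
end
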